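/- arXiv:math/0604036 — 2 statements merged into one kernel-verified Lean document; each statement's English description precedes it below -/
import Mathlib

section
/- Let p be a prime, r ≥ 1, G_r = Z/p^r Z, a ∈ G_r nonzero with p^{r−1} | a, and k = p^r − 2. If ⟨a_1,...,a_k⟩ is any multiset of nonzero elements of G_r such that no subset sums to a, then there exists b ∈ G_r with p ∤ b and an integer 0 ≤ n ≤ k such that n ≡ a·b^{−1} − 1 (mod p^r), the multiset consists of n copies of b and k − n copies of −b. -/
def msums {m : ℕ} (N : Multiset (ZMod m)) : Finset (ZMod m) :=
  (N.powerset.map Multiset.sum).toFinset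

lemma mem_msums {m : ℕ} {N : Multiset (ZMod m)} {y : ZMod m} :
    y ∈ msums N ↔ ∃ S ≤ N, S.sum = y := by
  simp [msums, Multiset.mem_powerset]

lemma zero_mem_msums {m : ℕ} (N : Multiset (ZMod m)) : 0 ∈ msums N :=
  mem_msums.2 ⟨0, Multiset.zero_le N, rfl⟩

lemma msums_cons {m : ℕ} (x : ZMod m) (N : Multiset (ZMod m)) :
    msums (x ::ₘ N) = msums N ∪ (msums N).image (x + ·) := by
  unfold msums
  rw [Multiset.powerset_cons, Multiset.map_add, Multiset.toFinset_add, Multiset.map_map,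
    Multiset.toFinset_map]
  congr 1
  ext y
  simp only [Function.comp, Finset.mem_image, Multiset.mem_toFinset, Multiset.mem_map,
    Multiset.mem_powerset, Multiset.sum_cons]
  constructor
  · rintro ⟨S, hS, rfl⟩; exact ⟨S.sum, ⟨S, hS, rfl⟩, rfl⟩
  · rintro ⟨z, ⟨S, hS, rfl⟩, rfl⟩; exact ⟨S, hS, rfl⟩

lemma aux_dvd (p : ℕ) (hp : p.Prime) (r : ℕ) (hr : 1 ≤ r) (x : ZMod (p ^ r)) (hx : x ≠ 0) :
    ∃ c : ZMod (p ^ r), c * x = (p : ZMod (p ^ r)) ^ (r - 1) := by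
  haveI : NeZero (p ^ r) := ⟨pow_ne_zero _ hp.pos.ne'⟩
  have hv0 : x.val ≠ 0 := fun h => hx ((ZMod.val_eq_zero x).1 h)
  have hvlt : x.val < p ^ r := ZMod.val_lt x
  set s := (x.val).factorization p with hs
  have hdvd : p ^ s ∣ x.val := Nat.ordProj_dvd x.val p
  have hslt : s < r := by
    have h1 : p ^ s ≤ x.val := Nat.le_of_dvd (Nat.pos_of_ne_zero hv0) hdvd
    exact (Nat.pow_lt_pow_iff_right hp.one_lt).1 (lt_of_le_of_lt h1 hvlt)
  have hvw : p ^ s * (x.val / p ^ s) = x.val := Nat.ordProj_mul_ordCompl_eq_self x.val p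
  have hpw : ¬ p ∣ (x.val / p ^ s) := Nat.not_dvd_ordCompl hp hv0
  have hcop : Nat.Coprime (x.val / p ^ s) (p ^ r) :=
    (Nat.coprime_comm.1 (hp.coprime_iff_not_dvd.2 hpw)).pow_right r
  set u := ZMod.unitOfCoprime _ hcop with hudef
  have hu : (u : ZMod (p ^ r)) = ((x.val / p ^ s : ℕ) : ZMod (p ^ r)) :=
    ZMod.coe_unitOfCoprime _ hcop
  refine ⟨(↑u⁻¹ : ZMod (p ^ r)) * (p : ZMod (p ^ r)) ^ (r - 1 - s), ?_⟩
  have hx' : x = ((p ^ s * (x.val / p ^ s) : ℕ) : ZMod (p ^ r)) := by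
    rw [hvw]; exact (ZMod.natCast_rightInverse x).symm
  rw [hx']
  push_cast
  have h1 : ((x.val / p ^ s : ℕ) : ZMod (p ^ r)) * (↑u⁻¹ : ZMod (p ^ r)) = 1 := by
    rw [← hu]; exact u.mul_inv
  have h2 : (p : ZMod (p ^ r)) ^ (r - 1 - s) * (p : ZMod (p ^ r)) ^ s
      = (p : ZMod (p ^ r)) ^ (r - 1) := by
    rw [← pow_add]; congr 1; omega
  calc (↑u⁻¹ : ZMod (p ^ r)) * (p : ZMod (p ^ r)) ^ (r - 1 - s)
      * ((p : ZMod (p ^ r)) ^ s * ((x.val / p ^ s : ℕ) : ZMod (p ^ r)))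
      = (((x.val / p ^ s : ℕ) : ZMod (p ^ r)) * ↑u⁻¹)
        * ((p : ZMod (p ^ r)) ^ (r - 1 - s) * (p : ZMod (p ^ r)) ^ s) := by ring
    _ = 1 * (p : ZMod (p ^ r)) ^ (r - 1) := by rw [h1, h2]
    _ = _ := one_mul _

/-- Every multiset of p^r − 2 nonzero elements of ℤ/p^rℤ avoiding a
(a ≠ 0, p^(r−1) ∣ a) is of the form 𝔐_{p,r,a}(b) for some unit b. -/
theorem stmt_5 (p : ℕ) (hp : p.Prime) (r : ℕ) (hr : 1 ≤ r)
    (a : ZMod (p ^ r)) (ha : a ≠ 0)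
    (hdvd : ∃ c : ZMod (p ^ r), a = (p : ZMod (p ^ r)) ^ (r - 1) * c)
    (M : Multiset (ZMod (p ^ r))) (hcard : M.card = p ^ r - 2)
    (hM0 : ∀ x ∈ M, x ≠ 0) (havoid : ∀ S ≤ M, S.sum ≠ a) :
    ∃ b : (ZMod (p ^ r))ˣ, ∃ n : ℕ, n ≤ p ^ r - 2 ∧
      (n : ZMod (p ^ r)) = a * (↑b⁻¹ : ZMod (p ^ r)) - 1 ∧
      M = Multiset.replicate n (b : ZMod (p ^ r)) +
          Multiset.replicate (p ^ r - 2 - n) (-(b : ZMod (p ^ r))) := by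
  haveI : NeZero (p ^ r) := ⟨pow_ne_zero _ hp.pos.ne'⟩
  have hm2 : 2 ≤ p ^ r := by
    calc 2 ≤ p := hp.two_le
    _ ≤ p ^ r := Nat.le_self_pow (by omega) p
  have havoid' : ∀ N ≤ M, a ∉ msums N := by
    intro N hN h
    obtain ⟨S, hS, hsum⟩ := mem_msums.1 h
    exact havoid S (hS.trans hN) hsum
  -- growth lemma
  have hgrow : ∀ N : Multiset (ZMod (p ^ r)), N ≤ M → Multiset.card N + 1 ≤ (msums N).card := by
    intro N
    induction N using Multiset.induction_on with
    | empty => intro _; simp [msums]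
    | cons x N ih =>
      intro hle
      have hN : N ≤ M := le_trans (Multiset.le_cons_self N x) hle
      have h1 := ih hN
      rw [msums_cons]
      by_contra hcon
      push_neg at hcon
      have hsub1 : msums N ⊆ msums N ∪ (msums N).image (x + ·) := Finset.subset_union_left
      have hcard_im : ((msums N).image (x + ·)).card = (msums N).card :=
        Finset.card_image_of_injective _ (add_right_injective x)
      have hcle : (msums N ∪ (msums N).image (x + ·)).card ≤ (msums N).card := by
        simp only [Multiset.card_cons] at hcon; omega
      have hequ := Finset.eq_of_subset_of_card_le hsub1 hcle
      have hsub : (msums N).image (x + ·) ⊆ msums N := fun z hz => by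
        rw [hequ]; exact Finset.mem_union_right _ hz
      have hclosed : ∀ z ∈ msums N, x + z ∈ msums N := fun z hz =>
        hsub (Finset.mem_image_of_mem _ hz)
      have hmul : ∀ t : ℕ, (t : ZMod (p ^ r)) * x ∈ msums N := by
        intro t
        induction t with
        | zero => simpa using zero_mem_msums N
        | succ t iht =>
          have heq : ((t + 1 : ℕ) : ZMod (p ^ r)) * x = x + (t : ZMod (p ^ r)) * x := by
            push_cast; ring
          rw [heq]; exact hclosed _ iht
      have hx0 : x ≠ 0 := hM0 x (Multiset.mem_of_le hle (Multiset.mem_cons_self x N))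
      obtain ⟨c0, hc0⟩ := aux_dvd p hp r hr x hx0
      obtain ⟨ca, hca⟩ := hdvd
      have haeq : a = ((ca * c0).val : ZMod (p ^ r)) * x := by
        rw [ZMod.natCast_rightInverse (ca * c0), hca, ← hc0]; ring
      exact havoid' N hN (haeq ▸ hmul (ca * c0).val)
  -- full sum set
  have hSM : msums M = Finset.univ.erase a := by
    apply Finset.eq_of_subset_of_card_le
    · intro z hz
      exact Finset.mem_erase.2 ⟨fun h => havoid' M le_rfl (h ▸ hz), Finset.mem_univ z⟩
    · rw [Finset.card_erase_of_mem (Finset.mem_univ a), Finset.card_univ, ZMod.card]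
      have := hgrow M le_rfl
      rw [hcard] at this
      omega
  -- pair lemma
  have hpair : ∀ x ∈ M, ∀ y ∈ M.erase x, y = x ∨ y = -x := by
    intro x hx y hy
    by_contra hcon
    push_neg at hcon
    obtain ⟨hyx, hyxn⟩ := hcon
    have hyM : y ∈ M := Multiset.mem_of_mem_erase hy
    have hx0 : x ≠ 0 := hM0 x hx
    have hy0 : y ≠ 0 := hM0 y hyM
    have hNle : (M.erase x).erase y ≤ M :=
      le_trans (Multiset.erase_le _ _) (Multiset.erase_le _ _)
    have hm4 : 4 ≤ p ^ r := by
      have h1 : 0 < Multiset.card (M.erase x) := Multiset.card_pos_iff_exists_mem.2 ⟨y, hy⟩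
      rw [Multiset.card_erase_of_mem hx, Nat.pred_eq_sub_one, hcard] at h1
      omega
    have hcardN : Multiset.card ((M.erase x).erase y) = p ^ r - 4 := by
      rw [Multiset.card_erase_of_mem hy, Multiset.card_erase_of_mem hx, hcard,
        Nat.pred_eq_sub_one, Nat.pred_eq_sub_one]
      omega
    have e1 : a ≠ a - x := fun h => hx0 (by linear_combination h)
    have e2 : a ≠ a - y := fun h => hy0 (by linear_combination h)
    have e3 : a ≠ a - x - y := fun h => hyxn (by linear_combination h)
    have e4 : a - x ≠ a - y := fun h => hyx (by linear_combination h)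
    have e5 : a - x ≠ a - x - y := fun h => hy0 (by linear_combination h)
    have e6 : a - y ≠ a - x - y := fun h => hx0 (by linear_combination h)
    have h4 : ({a, a - x, a - y, a - x - y} : Finset (ZMod (p ^ r))).card = 4 := by
      rw [Finset.card_insert_of_notMem (by simp [e1, e2, e3]),
        Finset.card_insert_of_notMem (by simp [e4, e5]),
        Finset.card_insert_of_notMem (by simp [e6]),
        Finset.card_singleton]
    have hforb : msums ((M.erase x).erase y) ⊆
        Finset.univ \ ({a, a - x, a - y, a - x - y} : Finset (ZMod (p ^ r))) := by
      intro z hz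
      obtain ⟨S, hS, hsum⟩ := mem_msums.1 hz
      have hSx : (x ::ₘ S) ≤ M := by
        have h1 : x ::ₘ S ≤ x ::ₘ M.erase x :=
          Multiset.cons_le_cons _ (hS.trans (Multiset.erase_le _ _))
        rwa [Multiset.cons_erase hx] at h1
      have hys : y ::ₘ S ≤ M.erase x := by
        have h1 := Multiset.cons_le_cons y hS
        rwa [Multiset.cons_erase hy] at h1
      have hSy : (y ::ₘ S) ≤ M := hys.trans (Multiset.erase_le _ _)
      have hSxy : (x ::ₘ y ::ₘ S) ≤ M := by
        have h1 : x ::ₘ y ::ₘ S ≤ x ::ₘ M.erase x := Multiset.cons_le_cons _ hys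
        rwa [Multiset.cons_erase hx] at h1
      rw [Finset.mem_sdiff]
      refine ⟨Finset.mem_univ z, ?_⟩
      simp only [Finset.mem_insert, Finset.mem_singleton]
      push_neg
      refine ⟨fun h => havoid S (hS.trans hNle) (hsum.trans h), ?_, ?_, ?_⟩
      · intro h
        exact havoid (x ::ₘ S) hSx (by rw [Multiset.sum_cons, hsum, h]; ring)
      · intro h
        exact havoid (y ::ₘ S) hSy (by rw [Multiset.sum_cons, hsum, h]; ring)
      · intro h
        exact havoid (x ::ₘ y ::ₘ S) hSxy
          (by rw [Multiset.sum_cons, Multiset.sum_cons, hsum, h]; ring)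
    have hc1 := Finset.card_le_card hforb
    rw [Finset.card_sdiff_of_subset (Finset.subset_univ _), Finset.card_univ, ZMod.card, h4] at hc1
    have hc2 := hgrow _ hNle
    omega
  -- main case analysis
  rcases Multiset.empty_or_exists_mem M with hM | ⟨b, hbM⟩
  · -- M = 0, so p ^ r = 2
    have hme : p ^ r = 2 := by
      rw [hM] at hcard; simp at hcard; omega
    have hav : a.val = 1 := by
      have h1 : a.val < p ^ r := ZMod.val_lt a
      have h2 : a.val ≠ 0 := fun h => ha ((ZMod.val_eq_zero a).1 h)
      omega
    have ha1 : a = 1 := by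
      calc a = ((a.val : ℕ) : ZMod (p ^ r)) := (ZMod.natCast_rightInverse a).symm
        _ = 1 := by rw [hav, Nat.cast_one]
    refine ⟨1, 0, by omega, ?_, ?_⟩
    · simp [ha1]
    · rw [hM]
      have h0 : p ^ r - 2 - 0 = 0 := by omega
      simp [h0]
  · have hb0 : b ≠ 0 := hM0 b hbM
    have hm3 : 3 ≤ p ^ r := by
      have h1 : 0 < Multiset.card M := Multiset.card_pos_iff_exists_mem.2 ⟨b, hbM⟩
      omega
    -- b is not its own negative
    have hbne : b ≠ -b := by
      intro h
      have hbb : b + b = 0 := by linear_combination h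
      obtain ⟨c0, hc0⟩ := aux_dvd p hp r hr b hb0
      have h2p : (2 : ZMod (p ^ r)) * (p : ZMod (p ^ r)) ^ (r - 1) = 0 := by
        rw [← hc0]; linear_combination c0 * hbb
      have hdvd2 : (p : ℕ) ^ r ∣ 2 * p ^ (r - 1) := by
        have h6 : ((2 * p ^ (r - 1) : ℕ) : ZMod (p ^ r)) = 0 := by push_cast; exact h2p
        exact (ZMod.natCast_eq_zero_iff _ _).1 h6
      have hp2 : p = 2 := by
        have h3 : p ^ r = p ^ (r - 1) * p := by rw [← pow_succ]; congr 1; omega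
        rw [h3, mul_comm 2] at hdvd2
        have h4 : p ∣ 2 := (Nat.mul_dvd_mul_iff_left (pow_pos hp.pos (r - 1))).1 hdvd2
        have h5 := Nat.le_of_dvd (by norm_num) h4
        have := hp.two_le
        omega
      obtain ⟨ca, hca⟩ := hdvd
      have haa : a + a = 0 := by
        rw [hca]; linear_combination ca * h2p
      have hval : ∀ z : ZMod (p ^ r), z ≠ 0 → z + z = 0 → 2 * z.val = p ^ r := by
        intro z hz hzz
        have h1 : (z.val + z.val) % (p ^ r) = 0 := by
          have h7 := congrArg ZMod.val hzz
          rwa [ZMod.val_add, ZMod.val_zero] at h7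
        have h2 : z.val < p ^ r := ZMod.val_lt z
        have h3 : z.val ≠ 0 := fun h => hz ((ZMod.val_eq_zero z).1 h)
        obtain ⟨c, hc⟩ := Nat.dvd_of_mod_eq_zero h1
        rcases c with _ | _ | c
        · omega
        · omega
        · have h8 : p ^ r * 2 ≤ p ^ r * (c + 1 + 1) := Nat.mul_le_mul_left _ (by omega)
          omega
      have hab : a = b := by
        have h1 := hval a ha haa
        have h2 := hval b hb0 hbb
        have h3 : a.val = b.val := by omega
        calc a = ((a.val : ℕ) : ZMod (p ^ r)) := (ZMod.natCast_rightInverse a).symm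
          _ = ((b.val : ℕ) : ZMod (p ^ r)) := by rw [h3]
          _ = b := ZMod.natCast_rightInverse b
      exact havoid {b} (Multiset.singleton_le.2 hbM) (by rw [Multiset.sum_singleton, hab])
    have hbne' : -b ≠ b := fun h => hbne h.symm
    -- all elements are b or -b
    have hall : ∀ z ∈ M, z = b ∨ z = -b := by
      intro z hz
      by_cases h : z = b
      · exact Or.inl h
      · rcases hpair b hbM z ((Multiset.mem_erase_of_ne h).2 hz) with h' | h'
        · exact absurd h' h
        · exact Or.inr h'
    -- structure of submultisets of M
    have hstruct : ∀ S : Multiset (ZMod (p ^ r)), (∀ w ∈ S, w = b ∨ w = -b) →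
        S = Multiset.replicate (S.count b) b + Multiset.replicate (S.count (-b)) (-b) ∧
        S.count b + S.count (-b) = Multiset.card S := by
      intro S hS
      have h1 : S.filter (· = b) = Multiset.replicate (S.count b) b := Multiset.filter_eq' S b
      have h2 : S.filter (fun z => ¬ z = b) = S.filter (· = -b) := by
        apply Multiset.filter_congr
        intro z hz
        constructor
        · intro h
          rcases hS z hz with h' | h'
          · exact absurd h' h
          · exact h'
        · intro h
          rw [h]; exact hbne'
      have h3 : S.filter (· = -b) = Multiset.replicate (S.count (-b)) (-b) :=
        Multiset.filter_eq' S (-b)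
      have h4 : S.filter (· = b) + S.filter (fun z => ¬ z = b) = S :=
        Multiset.filter_add_not _ S
      constructor
      · conv_lhs => rw [← h4]
        rw [h1, h2, h3]
      · have h5 := congrArg Multiset.card h4
        rwa [Multiset.card_add, h1, h2, h3, Multiset.card_replicate,
          Multiset.card_replicate] at h5
    set n := M.count b with hn
    have hnle : n ≤ p ^ r - 2 := hcard ▸ Multiset.count_le_card b M
    obtain ⟨hMstruct, hMcount⟩ := hstruct M hall
    have hcntneg : M.count (-b) = p ^ r - 2 - n := by rw [hcard] at hMcount; omega
    -- sums of ±b multisets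
    have hsum_pm : ∀ S : Multiset (ZMod (p ^ r)), (∀ w ∈ S, w = b ∨ w = -b) →
        S.sum = (S.count b : ZMod (p ^ r)) * b - (S.count (-b) : ZMod (p ^ r)) * b := by
      intro S hS
      obtain ⟨h1, _⟩ := hstruct S hS
      calc S.sum = (Multiset.replicate (S.count b) b
          + Multiset.replicate (S.count (-b)) (-b)).sum := by conv_lhs => rw [h1]
        _ = _ := by
          rw [Multiset.sum_add, Multiset.sum_replicate, Multiset.sum_replicate,
            nsmul_eq_mul, nsmul_eq_mul]
          ring
    -- b is a unit
    haveI : Fact (2 < p ^ r) := ⟨by omega⟩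
    have hunit : IsUnit b := by
      have hz : ∃ z : ZMod (p ^ r), IsUnit z ∧ z ≠ a := by
        by_cases h : a = 1
        · exact ⟨-1, isUnit_one.neg, by rw [h]; exact ZMod.neg_one_ne_one⟩
        · exact ⟨1, isUnit_one, fun hh => h hh.symm⟩
      obtain ⟨z, hz1, hza⟩ := hz
      have hzmem : z ∈ msums M := by
        rw [hSM]; exact Finset.mem_erase.2 ⟨hza, Finset.mem_univ _⟩
      obtain ⟨S, hSle, hsum⟩ := mem_msums.1 hzmem
      have h1 := hsum_pm S (fun w hw => hall w (Multiset.mem_of_le hSle hw))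
      refine isUnit_of_dvd_unit ⟨(S.count b : ZMod (p ^ r)) - S.count (-b), ?_⟩ (hsum ▸ hz1)
      rw [h1]; ring
    obtain ⟨u, hu⟩ := hunit
    -- the key congruence
    have hw : ((n + 1 : ℕ) : ZMod (p ^ r)) * b = a := by
      by_contra hne
      have hmem : ((n + 1 : ℕ) : ZMod (p ^ r)) * b ∈ msums M := by
        rw [hSM]; exact Finset.mem_erase.2 ⟨hne, Finset.mem_univ _⟩
      obtain ⟨S, hSle, hsum⟩ := mem_msums.1 hmem
      have hallS : ∀ w ∈ S, w = b ∨ w = -b := fun w hw => hall w (Multiset.mem_of_le hSle hw)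
      have hi : S.count b ≤ n := Multiset.count_le_of_le b hSle
      have hj : S.count (-b) ≤ p ^ r - 2 - n := hcntneg ▸ Multiset.count_le_of_le (-b) hSle
      have heq : (S.count b : ZMod (p ^ r)) - (S.count (-b) : ZMod (p ^ r))
          = ((n + 1 : ℕ) : ZMod (p ^ r)) := by
        have h1 := hsum_pm S hallS
        rw [hsum] at h1
        have h2 : ((S.count b : ZMod (p ^ r)) - (S.count (-b) : ZMod (p ^ r))) * b
            = ((n + 1 : ℕ) : ZMod (p ^ r)) * b := by rw [sub_mul, ← h1]
        exact IsUnit.mul_right_cancel ⟨u, hu⟩ h2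
      have hA : ((S.count b + (p ^ r - 2 - n - S.count (-b)) : ℕ) : ZMod (p ^ r))
          = ((n + 1 + (p ^ r - 2 - n) : ℕ) : ZMod (p ^ r)) := by
        rw [Nat.cast_add, Nat.cast_sub hj, Nat.cast_add]
        push_cast at heq ⊢
        linear_combination heq
      have hAlt : S.count b + (p ^ r - 2 - n - S.count (-b)) < p ^ r := by omega
      have hBlt : n + 1 + (p ^ r - 2 - n) < p ^ r := by omega
      have hfin : S.count b + (p ^ r - 2 - n - S.count (-b)) = n + 1 + (p ^ r - 2 - n) := by
        have h1 := congrArg ZMod.val hA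
        rwa [ZMod.val_cast_of_lt hAlt, ZMod.val_cast_of_lt hBlt] at h1
      omega
    -- conclude
    refine ⟨u, n, hnle, ?_, ?_⟩
    · have h1 : a * (↑u⁻¹ : ZMod (p ^ r)) = ((n + 1 : ℕ) : ZMod (p ^ r)) := by
        rw [← hw, ← hu, mul_assoc, Units.mul_inv, mul_one]
      rw [h1]; push_cast; ring
    · rw [hu, ← hcntneg]
      exact hMstruct
end

section
/- Let q ≥ 3 be a prime and let n be a positive integer coprime to q with Ω(n) ≥ q − 2 (number of prime factors with multiplicity) such that no divisor d > 1 of n is congruent to 1 mod q. Then Ω(n) = q − 2 and all prime factors of n are congruent to a single primitive root a modulo q. -/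
/-!
The residues of the prime factors of `n` form a sequence in `(ZMod q)ˣ` none of whose nonempty
subproducts is `1`, because such a subproduct is a divisor `d > 1` of `n` with `d ≡ 1 (mod q)`.
In a finite abelian group `G` the prefix products of such a sequence are pairwise distinct, so it
has at most `|G| - 1` terms. With exactly `|G| - 1` terms the prefix products exhaust `G`, and
listing the sequence as `x, y, …` forces `y = x`: the sequence is constant, equal to some `a` with
`a ^ k ≠ 1` for `0 < k < |G|`, i.e. a generator of `G`.
-/

namespace Multiset

theorem exists_le_map_eq_of_le_map {α β : Type*} {f : α → β} {s : Multiset β} {t : Multiset α}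
    (h : s ≤ t.map f) : ∃ u ≤ t, u.map f = s := by
  induction s using Quotient.inductionOn
  induction t using Quotient.inductionOn
  obtain ⟨w, hw, hwt⟩ := coe_le.mp h
  obtain ⟨u, hu, rfl⟩ := List.sublist_map_iff.mp hwt
  exact ⟨u, coe_le.mpr hu.subperm, coe_eq_coe.mpr hw⟩

variable {G : Type*} [CommGroup G]

/-- The multiplicative form of a zero-sum-free sequence. -/
def ProdOneFree (s : Multiset G) : Prop :=
  ∀ t ≤ s, t ≠ 0 → t.prod ≠ 1

namespace ProdOneFree

theorem injective_prod_take {l : List G} (hl : ProdOneFree (l : Multiset G)) :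
    Function.Injective fun i : Fin (l.length + 1) => (l.take i).prod := by
  refine Function.Injective.of_lt_imp_ne fun i j hij heq => ?_
  have hsplit : (l.take i).prod * ((l.take j).drop i).prod = (l.take j).prod := by
    rw [← List.prod_take_mul_prod_drop (l.take j) i, List.take_take, Nat.min_eq_left hij.le]
  refine hl _ (coe_le.mpr ((List.drop_sublist _ _).trans (List.take_sublist _ _)).subperm)
    ?_ (mul_eq_left.mp (hsplit.trans heq.symm))
  have := j.is_le
  simp only [ne_eq, coe_eq_zero, ← List.length_eq_zero_iff, List.length_drop, List.length_take]
  omega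

variable [Fintype G]

theorem card_lt {s : Multiset G} (hs : s.ProdOneFree) : card s < Fintype.card G := by
  rw [← coe_toList s] at hs ⊢
  simpa using Fintype.card_le_of_injective _ hs.injective_prod_take

theorem surjective_prod_take {l : List G} (hl : ProdOneFree (l : Multiset G))
    (hcard : l.length + 1 = Fintype.card G) :
    Function.Surjective fun i : Fin (l.length + 1) => (l.take i).prod :=
  ((Fintype.bijective_iff_injective_and_card _).mpr
    ⟨hl.injective_prod_take, by simp [hcard]⟩).2

/-- Listing `s` as `x, y, …`, the element `y` is a prefix product; it cannot be the empty one, and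
one of length `k + 2` would make `x` times a subproduct equal to `1`. So `y` is the prefix `x`. -/
theorem eq_of_mem {s : Multiset G} (hs : s.ProdOneFree) (hcard : card s + 1 = Fintype.card G)
    {x y : G} (hx : x ∈ s) (hy : y ∈ s) : x = y := by
  classical
  obtain rfl | hxy := eq_or_ne x y
  · rfl
  set r := (s.erase x).erase y
  have hl : ((x :: y :: r.toList : List G) : Multiset G) = s := by
    rw [← cons_coe, ← cons_coe, coe_toList, cons_erase ((mem_erase_of_ne hxy.symm).mpr hy),
      cons_erase hx]
  rw [← hl] at hs hcard
  obtain ⟨⟨_ | _ | k, hk⟩, hi⟩ := hs.surjective_prod_take hcard y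
  · exact (hs {y} (singleton_le.mpr (by simp)) (by simp) (by simpa using hi.symm)).elim
  · simpa using hi
  · simp only [List.take_succ_cons, List.prod_cons, ← mul_assoc, mul_right_comm x y,
      mul_eq_right] at hi
    refine (hs (x ::ₘ (r.toList.take k : List G)) ?_ cons_ne_zero (by simpa using hi)).elim
    rw [← cons_coe, ← cons_coe]
    exact cons_le_cons x ((coe_le.mpr (List.take_sublist _ _).subperm).trans (le_cons_self _ _))

theorem exists_orderOf_eq_card {s : Multiset G} (hs : s.ProdOneFree)
    (hcard : card s + 1 = Fintype.card G) :
    ∃ a : G, orderOf a = Fintype.card G ∧ ∀ x ∈ s, x = a := by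
  rcases s.empty_or_exists_mem with rfl | ⟨a, ha⟩
  · exact ⟨1, by simpa using hcard, by simp⟩
  have hall : ∀ x ∈ s, x = a := fun x hx => hs.eq_of_mem hcard hx ha
  refine ⟨a, orderOf_le_card_univ.antisymm (Nat.not_lt.mp fun hlt => ?_), hall⟩
  have hrep : s = replicate (card s) a := eq_replicate.mpr ⟨rfl, hall⟩
  refine hs (replicate (orderOf a) a) ?_ ?_ (by simp [pow_orderOf_eq_one])
  · rw [hrep]
    exact (replicate_le_replicate a).mpr (by omega)
  · exact card_pos.mp (by rw [card_replicate]; exact orderOf_pos a)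

end ProdOneFree

end Multiset

open Multiset

theorem prodOneFree_of_map_primeFactorsList {q n : ℕ} (hq : 1 < q) (hn : 0 < n)
    (havoid : ∀ d : ℕ, d ∣ n → 1 < d → d % q ≠ 1) {S : Multiset (ZMod q)ˣ}
    (hS : S.map Units.val = (n.primeFactorsList : Multiset ℕ).map Nat.cast) : S.ProdOneFree := by
  intro t ht ht0 hprod
  obtain ⟨u, hu, hut⟩ := exists_le_map_eq_of_le_map (hS ▸ map_le_map (f := Units.val) ht)
  have hdvd : u.prod ∣ n := by
    simpa [Nat.prod_primeFactorsList hn.ne'] using prod_dvd_prod_of_le hu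
  have hu0 : u ≠ 0 := by rintro rfl; simp_all
  obtain ⟨p, hp⟩ := exists_mem_of_ne_zero hu0
  have hp1 : 1 < p := (Nat.prime_of_mem_primeFactorsList (mem_coe.mp (mem_of_le hu hp))).one_lt
  refine havoid u.prod hdvd (hp1.trans_le (Nat.le_of_dvd (Nat.pos_of_dvd_of_pos hdvd hn)
    (dvd_prod hp))) ?_
  have hcast : ((u.prod : ℕ) : ZMod q) = 1 := by
    rw [Nat.cast_multiset_prod, hut]
    change (t.map (Units.coeHom (ZMod q))).prod = 1
    rw [← map_multiset_prod, hprod, map_one]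
  simpa [Nat.mod_eq_of_lt hq] using (ZMod.natCast_eq_natCast_iff' _ 1 q).mp (by simpa using hcast)

theorem stmt_16_general (q : ℕ) (hq : q.Prime)
    (n : ℕ) (hn : 0 < n) (hcop : Nat.Coprime n q)
    (hbig : q - 2 ≤ n.primeFactorsList.length)
    (havoid : ∀ d : ℕ, d ∣ n → 1 < d → d % q ≠ 1) :
    n.primeFactorsList.length = q - 2 ∧
      ∃ a : ZMod q, orderOf a = q - 1 ∧ ∀ p ∈ n.primeFactors, (p : ZMod q) = a := by
  have := Fact.mk hq
  have hunit : ∀ x ∈ (n.primeFactorsList : Multiset ℕ).map (Nat.cast : ℕ → ZMod q), IsUnit x := by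
    simp only [mem_map, mem_coe]
    rintro _ ⟨p, hp, rfl⟩
    exact (ZMod.isUnit_iff_coprime p q).mpr
      (hcop.coprime_dvd_left (Nat.dvd_of_mem_primeFactorsList hp))
  lift (n.primeFactorsList : Multiset ℕ).map (Nat.cast : ℕ → ZMod q) to Multiset (ZMod q)ˣ
    using hunit with S hS
  have hfree := prodOneFree_of_map_primeFactorsList hq.one_lt hn havoid hS
  have hlen : card S = n.primeFactorsList.length := by simpa using congrArg card hS
  have hlt := hfree.card_lt
  rw [ZMod.card_units] at hlt
  have hmax : n.primeFactorsList.length = q - 2 := by omega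
  obtain ⟨a, ha, hall⟩ := hfree.exists_orderOf_eq_card (by rw [ZMod.card_units]; omega)
  refine ⟨hmax, a, by rw [orderOf_units, ha, ZMod.card_units], fun p hp => ?_⟩
  obtain ⟨x, hx, hxp⟩ := mem_map.mp (hS ▸ mem_map_of_mem Nat.cast
    (mem_coe.mpr (Nat.mem_primeFactors_iff_mem_primeFactorsList.mp hp)) :
    (p : ZMod q) ∈ S.map Units.val)
  rw [← hxp, hall x hx]

/-- If gcd(n,q) = 1, Ω(n) ≥ q − 2, and no divisor d > 1 of n is ≡ 1 (mod q),
then Ω(n) = q − 2 and all prime factors of n are congruent to a single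
primitive root a modulo q. -/
theorem stmt_16 (q : ℕ) (hq : q.Prime) (hq3 : 3 ≤ q)
    (n : ℕ) (hn : 0 < n) (hcop : Nat.Coprime n q)
    (hbig : q - 2 ≤ n.primeFactorsList.length)
    (havoid : ∀ d : ℕ, d ∣ n → 1 < d → d % q ≠ 1) :
    n.primeFactorsList.length = q - 2 ∧
      ∃ a : ZMod q, orderOf a = q - 1 ∧ ∀ p ∈ n.primeFactors, (p : ZMod q) = a :=
  stmt_16_general q hq n hn hcop hbig havoid
end
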